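/- Let A be an n × m real matrix of rank r and s < r. Then max over U ∈ ℝ^{n×s} with orthonormal columns of ‖UUᵀA‖² equals max over {A₁ ∈ ℝ^{n×m} : rank A₁ ≤ s, ⟨A₁, A⟩ = ‖A₁‖²} of ‖A₁‖², and both equal ∑_{i=1}^s σᵢ² where σᵢ are the singular values of A in decreasing order. -/

import Mathlib

open Matrix

/-- The Frobenius (trace) inner product on real matrices. -/
noncomputable def frobInner {n m : ℕ} (A B : Matrix (Fin n) (Fin m) ℝ) : ℝ :=
  ∑ i, ∑ j, A i j * B i j

/-- The squared Frobenius norm. -/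
noncomputable def frobSq {n m : ℕ} (A : Matrix (Fin n) (Fin m) ℝ) : ℝ := frobInner A A

/-- The Frobenius norm. -/
noncomputable def frobNorm {n m : ℕ} (A : Matrix (Fin n) (Fin m) ℝ) : ℝ :=
  Real.sqrt (frobSq A)

/-- The `n × m` rectangular diagonal matrix with diagonal entries `σ`. -/
noncomputable def svdS {n m : ℕ} (σ : Fin (min n m) → ℝ) : Matrix (Fin n) (Fin m) ℝ :=
  Matrix.of fun i j =>
    if h : (i : ℕ) = (j : ℕ) then σ ⟨i, by have := i.isLt; have := j.isLt; omega⟩ else 0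

/-! Write `A Aᵀ = U₀ D U₀ᵀ` with `D = diag(σ₁², σ₂², …)`. For an orthogonal projection `P` of
trace at most `s`, `‖PA‖² = tr(P A Aᵀ) = ∑ₖ σₖ² dₖ`, where the diagonal entries `dₖ` of
`U₀ᵀ P U₀` lie in `[0, 1]` and sum to at most `s`; such a weighted sum is at most `∑_{k<s} σₖ²`,
with equality for the projection onto the first `s` columns of `U₀`. This handles the first set,
whose elements are `‖UUᵀA‖²`. A feasible `A₁` of rank at most `s` is fixed by the projection `P`
onto its column space, so `⟨A₁, PA⟩ = ⟨A₁, A⟩ = ‖A₁‖²` and Cauchy–Schwarz gives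
`‖A₁‖² ≤ ‖PA‖²`; conversely `UUᵀA` is feasible. -/

section Frobenius

variable {n m : ℕ}

lemma frobInner_eq_trace (A B : Matrix (Fin n) (Fin m) ℝ) : frobInner A B = (A * Bᵀ).trace := by
  simp [frobInner, trace, mul_apply]

lemma frobInner_mul_left (P : Matrix (Fin n) (Fin n) ℝ) (A B : Matrix (Fin n) (Fin m) ℝ) :
    frobInner (P * A) B = frobInner A (Pᵀ * B) := by
  rw [frobInner_eq_trace, frobInner_eq_trace, Matrix.mul_assoc, trace_mul_comm,
    transpose_mul, transpose_transpose, Matrix.mul_assoc]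

lemma frobInner_sq_le_frobSq_mul_frobSq (A B : Matrix (Fin n) (Fin m) ℝ) :
    frobInner A B ^ 2 ≤ frobSq A * frobSq B := by
  have := Finset.sum_mul_sq_le_sq_mul_sq Finset.univ (fun p : Fin n × Fin m => A p.1 p.2)
    (fun p => B p.1 p.2)
  simpa [frobSq, frobInner, Fintype.sum_prod_type, sq] using this

lemma frobSq_nonneg (A : Matrix (Fin n) (Fin m) ℝ) : 0 ≤ frobSq A := by
  unfold frobSq frobInner
  exact Fintype.sum_nonneg fun _ => Fintype.sum_nonneg fun _ => mul_self_nonneg _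

lemma frobSq_le_of_frobInner_eq {A B : Matrix (Fin n) (Fin m) ℝ}
    (h : frobInner A B = frobSq A) : frobSq A ≤ frobSq B := by
  have hCS := frobInner_sq_le_frobSq_mul_frobSq A B
  rw [h, sq] at hCS
  rcases (frobSq_nonneg A).eq_or_lt with h0 | h0
  · exact h0 ▸ frobSq_nonneg B
  · exact le_of_mul_le_mul_left hCS h0

end Frobenius

section StarProjection

variable {ι κ : Type*} [Fintype ι]

lemma IsStarProjection.transpose_eq {P : Matrix ι ι ℝ} (hP : IsStarProjection P) : Pᵀ = P := by
  simpa [star_eq_conjTranspose] using hP.isSelfAdjoint.star_eq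

lemma isStarProjection_mul_transpose [Fintype κ] [DecidableEq κ] {U : Matrix ι κ ℝ}
    (hU : Uᵀ * U = 1) : IsStarProjection (U * Uᵀ) where
  isIdempotentElem := by
    rw [IsIdempotentElem, Matrix.mul_assoc, ← Matrix.mul_assoc Uᵀ, hU, Matrix.one_mul]
  isSelfAdjoint := by simp [IsSelfAdjoint, star_eq_conjTranspose, transpose_mul]

lemma IsStarProjection.transpose_mul_mul [DecidableEq ι] [Fintype κ] {P : Matrix ι ι ℝ}
    (hP : IsStarProjection P) {U : Matrix ι κ ℝ} (hU : U * Uᵀ = 1) :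
    IsStarProjection (Uᵀ * P * U) where
  isIdempotentElem := by
    rw [IsIdempotentElem]
    calc Uᵀ * P * U * (Uᵀ * P * U) = Uᵀ * (P * (U * Uᵀ) * P) * U := by
          simp only [Matrix.mul_assoc]
      _ = Uᵀ * P * U := by rw [hU, Matrix.mul_one, hP.isIdempotentElem.eq, Matrix.mul_assoc]
  isSelfAdjoint := by
    simp [IsSelfAdjoint, star_eq_conjTranspose, transpose_mul, hP.transpose_eq, Matrix.mul_assoc]

open scoped MatrixOrder in
lemma IsStarProjection.diag_mem_Icc [DecidableEq ι] {P : Matrix ι ι ℝ}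
    (hP : IsStarProjection P) (k : ι) : P k k ∈ Set.Icc 0 1 := by
  obtain ⟨h0, h1⟩ := hP.mem_Icc
  exact ⟨(nonneg_iff_posSemidef.mp h0).diag_nonneg,
    by simpa using (le_iff.mp h1).diag_nonneg (i := k)⟩

lemma trace_mul_transpose_of_orthonormal [Fintype κ] [DecidableEq κ] {U : Matrix ι κ ℝ}
    (hU : Uᵀ * U = 1) : (U * Uᵀ).trace = Fintype.card κ := by
  rw [trace_mul_comm, hU, trace_one]

lemma frobSq_mul_of_isStarProjection {n m : ℕ} {P : Matrix (Fin n) (Fin n) ℝ}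
    (hP : IsStarProjection P) (A : Matrix (Fin n) (Fin m) ℝ) :
    frobSq (P * A) = frobInner (P * A) A := by
  rw [frobSq, frobInner_mul_left, frobInner_mul_left, hP.transpose_eq, ← Matrix.mul_assoc,
    hP.isIdempotentElem.eq]

lemma exists_isStarProjection_mul_eq_self [DecidableEq ι] [Fintype κ] (A : Matrix ι κ ℝ) :
    ∃ P : Matrix ι ι ℝ, IsStarProjection P ∧ P.trace = A.rank ∧ P * A = A := by
  obtain ⟨K, hK, hcol⟩ : ∃ K : Submodule ℝ (EuclideanSpace ℝ ι),
      Module.finrank ℝ K = A.rank ∧ ∀ j, WithLp.toLp 2 (A.col j) ∈ K := by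
    let e : (ι → ℝ) ≃ₗ[ℝ] EuclideanSpace ℝ ι := (WithLp.linearEquiv 2 ℝ (ι → ℝ)).symm
    refine ⟨(Submodule.span ℝ (Set.range A.col)).map (e : (ι → ℝ) →ₗ[ℝ] EuclideanSpace ℝ ι), ?_,
      fun j => Submodule.mem_map_of_mem (Submodule.subset_span ⟨j, rfl⟩)⟩
    rw [LinearEquiv.finrank_map_eq, rank_eq_finrank_span_cols]
  let b := stdOrthonormalBasis ℝ K
  set W : Matrix ι (Fin (Module.finrank ℝ K)) ℝ := of fun i a => (b a : EuclideanSpace ℝ ι) i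
  have hW : Wᵀ * W = 1 := by
    refine Matrix.ext fun a c => ?_
    have := b.inner_eq_ite a c
    rw [Submodule.coe_inner, PiLp.inner_apply] at this
    simp [W, mul_apply, one_apply, ← this, mul_comm]
  refine ⟨W * Wᵀ, isStarProjection_mul_transpose hW, ?_, ?_⟩
  · rw [trace_mul_transpose_of_orthonormal hW, Fintype.card_fin, hK]
  · ext i j
    have := congr_arg (fun x : K => (x : EuclideanSpace ℝ ι) i) (b.sum_repr' ⟨_, hcol j⟩)
    simp only [Submodule.coe_inner, PiLp.inner_apply, col_apply, RCLike.inner_apply,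
      Real.ringHom_apply, AddSubmonoidClass.coe_finsetSum, SetLike.val_smul, WithLp.ofLp_sum,
      WithLp.ofLp_smul, Finset.sum_apply, Pi.smul_apply, smul_eq_mul, Finset.sum_mul] at this
    simp only [W, mul_apply, of_apply, transpose_apply, Finset.sum_mul]
    rw [Finset.sum_comm, ← this]
    exact Finset.sum_congr rfl fun _ _ => Finset.sum_congr rfl fun _ _ => by ring

end StarProjection

section KyFan

open Finset

lemma Fin.sum_ite_val_lt {M : Type*} [AddCommMonoid M] {n s : ℕ} (hs : s ≤ n) (g : ℕ → M) :
    ∑ k : Fin n, (if (k : ℕ) < s then g k else 0) = ∑ k ∈ range s, g k := by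
  rw [Fin.sum_univ_eq_sum_range (fun k => if k < s then g k else 0), ← sum_filter]
  congr 1
  ext k
  simp only [mem_filter, mem_range]
  omega

lemma sum_mul_le_sum_range_of_antitone {n s : ℕ} (hs : s ≤ n) {g : ℕ → ℝ} (hg : Antitone g)
    (hg0 : ∀ k, 0 ≤ g k) {d : Fin n → ℝ} (hd : ∀ k, d k ∈ Set.Icc 0 1)
    (hds : ∑ k, d k ≤ s) : ∑ k : Fin n, g k * d k ≤ ∑ k ∈ range s, g k := by
  -- `g s` separates the weights with `k < s` from the others
  have hterm : ∀ k : Fin n, g k * d k ≤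
      (if (k : ℕ) < s then g k else 0) + g s * (d k - if (k : ℕ) < s then 1 else 0) := by
    intro k
    obtain ⟨hd0, hd1⟩ := hd k
    split_ifs with hks
    · nlinarith [hg hks.le]
    · nlinarith [hg (not_lt.mp hks)]
  have hcount : ∑ k : Fin n, (if (k : ℕ) < s then (1 : ℝ) else 0) = s := by
    simp [Fin.card_filter_val_lt, min_eq_right hs]
  calc ∑ k : Fin n, g k * d k
      ≤ ∑ k : Fin n, ((if (k : ℕ) < s then g k else 0)
          + g s * (d k - if (k : ℕ) < s then 1 else 0)) := sum_le_sum fun k _ => hterm k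
    _ = ∑ k ∈ range s, g k + g s * (∑ k, d k - s) := by
        rw [sum_add_distrib, ← mul_sum, sum_sub_distrib, hcount, Fin.sum_ite_val_lt hs]
    _ ≤ ∑ k ∈ range s, g k := by nlinarith [hg0 s]

variable {n s : ℕ} {U : Matrix (Fin n) (Fin n) ℝ}

-- Ky Fan's maximum principle.
lemma trace_mul_conj_diagonal_le (hs : s ≤ n) {g : ℕ → ℝ} (hg : Antitone g) (hg0 : ∀ k, 0 ≤ g k)
    (hU : Uᵀ * U = 1) {P : Matrix (Fin n) (Fin n) ℝ} (hP : IsStarProjection P)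
    (htr : P.trace ≤ s) :
    (P * (U * diagonal (fun k : Fin n => g k) * Uᵀ)).trace ≤ ∑ k ∈ range s, g k := by
  have hU' : U * Uᵀ = 1 := mul_eq_one_comm.mp hU
  set Q := Uᵀ * P * U
  have hQ : IsStarProjection Q := hP.transpose_mul_mul hU'
  have hQtr : Q.trace = P.trace := by
    rw [trace_mul_cycle, hU', Matrix.one_mul]
  have htrace :
      (P * (U * diagonal (fun k : Fin n => g k) * Uᵀ)).trace = ∑ k : Fin n, g k * Q k k := by
    rw [← Matrix.mul_assoc, trace_mul_cycle, ← Matrix.mul_assoc, trace_mul_comm]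
    simp [trace, diagonal_mul, Q]
  rw [htrace]
  exact sum_mul_le_sum_range_of_antitone hs hg hg0 hQ.diag_mem_Icc
    (by rw [← hQtr] at htr; exact htr)

lemma exists_trace_mul_conj_diagonal_eq (hs : s ≤ n) (g : ℕ → ℝ) (hU : Uᵀ * U = 1) :
    ∃ V : Matrix (Fin n) (Fin s) ℝ, Vᵀ * V = 1 ∧
      (V * Vᵀ * (U * diagonal (fun k : Fin n => g k) * Uᵀ)).trace = ∑ k ∈ range s, g k := by
  have hconj : ∀ M : Matrix (Fin n) (Fin n) ℝ,
      (U.submatrix id (Fin.castLE hs))ᵀ * M * U.submatrix id (Fin.castLE hs)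
        = (Uᵀ * M * U).submatrix (Fin.castLE hs) (Fin.castLE hs) := by
    intro M
    rw [submatrix_mul _ _ _ id _ Function.bijective_id, transpose_submatrix,
      submatrix_mul _ _ _ id _ Function.bijective_id]
    rfl
  refine ⟨U.submatrix id (Fin.castLE hs), ?_, ?_⟩
  · rw [← Matrix.mul_one (U.submatrix _ _)ᵀ, hconj, Matrix.mul_one, hU]
    exact submatrix_one _ (Fin.castLE_injective hs)
  · have hD :
        Uᵀ * (U * diagonal (fun k : Fin n => g k) * Uᵀ) * U = diagonal fun k : Fin n => g k := by
      rw [← Matrix.mul_assoc, ← Matrix.mul_assoc, hU, Matrix.one_mul, Matrix.mul_assoc, hU,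
        Matrix.mul_one]
    rw [Matrix.mul_assoc, trace_mul_comm, hconj, hD]
    simp [trace, Fin.sum_univ_eq_sum_range (fun k => g k)]

end KyFan

section SingularValues

variable {n m : ℕ} (σ : Fin (min n m) → ℝ)

-- Indexed by `ℕ` and extended by `0`, so that it is antitone whenever `σ` is antitone and
-- nonnegative.
noncomputable def paddedSq (k : ℕ) : ℝ :=
  if h : k < min n m then σ ⟨k, h⟩ ^ 2 else 0

lemma svdS_mul_transpose :
    svdS σ * (svdS σ)ᵀ = diagonal fun k : Fin n => paddedSq σ k := by
  ext a b
  simp only [mul_apply, transpose_apply, svdS, of_apply, diagonal_apply, paddedSq]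
  by_cases ham : (a : ℕ) < m
  · rw [Finset.sum_eq_single ⟨a, ham⟩]
    · by_cases hab : a = b
      · subst hab
        simp [lt_min a.isLt ham, sq]
      · have : (b : ℕ) ≠ a := fun h => hab (Fin.ext h.symm)
        simp [hab, this]
    · intro j _ hj
      have : (a : ℕ) ≠ j := fun h => hj (Fin.ext h.symm)
      simp [this]
    · simp
  · have : ¬ (a : ℕ) < min n m := fun h => ham (h.trans_le (min_le_right n m))
    rw [Finset.sum_eq_zero fun j _ => ?_]
    · simp [this]
    · have : (a : ℕ) ≠ j := fun h => ham (h ▸ j.isLt)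
      simp [this]

lemma svd_mul_self_transpose {U₀ : Matrix (Fin n) (Fin n) ℝ} {V₀ : Matrix (Fin m) (Fin m) ℝ}
    (hV₀ : V₀ᵀ * V₀ = 1) :
    U₀ * svdS σ * V₀ᵀ * (U₀ * svdS σ * V₀ᵀ)ᵀ
      = U₀ * diagonal (fun k : Fin n => paddedSq σ k) * U₀ᵀ := by
  rw [← svdS_mul_transpose, transpose_mul, transpose_mul, transpose_transpose]
  simp only [Matrix.mul_assoc]
  rw [← Matrix.mul_assoc V₀ᵀ, hV₀, Matrix.one_mul]

variable {σ}

lemma antitone_paddedSq (hmono : Antitone σ) (hnn : ∀ i, 0 ≤ σ i) : Antitone (paddedSq σ) := by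
  intro k l hkl
  unfold paddedSq
  split_ifs with hl hk hk
  · exact pow_le_pow_left₀ (hnn _) (hmono (Fin.mk_le_mk.mpr hkl)) 2
  · omega
  · positivity
  · rfl

lemma paddedSq_nonneg (k : ℕ) : 0 ≤ paddedSq σ k := by
  unfold paddedSq
  split_ifs <;> positivity

lemma sum_range_paddedSq {s : ℕ} (hs : s ≤ min n m) :
    ∑ k ∈ Finset.range s, paddedSq σ k
      = ∑ i ∈ Finset.univ.filter (fun i : Fin (min n m) => (i : ℕ) < s), σ i ^ 2 := by
  rw [← Fin.sum_ite_val_lt hs, Finset.sum_filter]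
  refine Finset.sum_congr rfl fun i _ => ?_
  simp only [paddedSq, dif_pos i.isLt, Fin.eta]

end SingularValues

theorem max_proj_eq_max_feasible_general {n m s r : ℕ} (hsr : s < r)
    (A : Matrix (Fin n) (Fin m) ℝ) (hrank : A.rank = r)
    (U₀ : Matrix (Fin n) (Fin n) ℝ) (V₀ : Matrix (Fin m) (Fin m) ℝ)
    (σ : Fin (min n m) → ℝ) (hU₀ : U₀ᵀ * U₀ = 1) (hV₀ : V₀ᵀ * V₀ = 1)
    (hmono : Antitone σ) (hnn : ∀ i, 0 ≤ σ i) (hA : A = U₀ * svdS σ * V₀ᵀ) :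
    IsGreatest {x : ℝ | ∃ U : Matrix (Fin n) (Fin s) ℝ, Uᵀ * U = 1 ∧ x = frobSq (U * Uᵀ * A)}
        (∑ i ∈ Finset.univ.filter (fun i : Fin (min n m) => (i : ℕ) < s), σ i ^ 2) ∧
      IsGreatest {x : ℝ | ∃ A₁ : Matrix (Fin n) (Fin m) ℝ,
          A₁.rank ≤ s ∧ frobInner A₁ A = frobSq A₁ ∧ x = frobSq A₁}
        (∑ i ∈ Finset.univ.filter (fun i : Fin (min n m) => (i : ℕ) < s), σ i ^ 2) := by
  have hs : s ≤ min n m :=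
    hsr.le.trans (hrank ▸ le_min (rank_le_height A) (rank_le_width A))
  have hs' : s ≤ n := hs.trans (min_le_left n m)
  have hAAt : A * Aᵀ = U₀ * diagonal (fun k : Fin n => paddedSq σ k) * U₀ᵀ :=
    hA ▸ svd_mul_self_transpose σ hV₀
  rw [← sum_range_paddedSq hs]
  have bound : ∀ P : Matrix (Fin n) (Fin n) ℝ, IsStarProjection P → P.trace ≤ s →
      frobSq (P * A) ≤ ∑ k ∈ Finset.range s, paddedSq σ k := fun P hP htr => by
    rw [frobSq_mul_of_isStarProjection hP, frobInner_eq_trace, Matrix.mul_assoc, hAAt]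
    exact trace_mul_conj_diagonal_le hs' (antitone_paddedSq hmono hnn) paddedSq_nonneg hU₀ hP
      htr
  obtain ⟨U, hU, hUA⟩ := exists_trace_mul_conj_diagonal_eq hs' (paddedSq σ) hU₀
  have hUP := isStarProjection_mul_transpose hU
  have hval : frobSq (U * Uᵀ * A) = ∑ k ∈ Finset.range s, paddedSq σ k := by
    rw [frobSq_mul_of_isStarProjection hUP, frobInner_eq_trace, Matrix.mul_assoc, hAAt, hUA]
  refine ⟨⟨⟨U, hU, hval.symm⟩, ?_⟩, ⟨⟨U * Uᵀ * A, ?_, ?_, hval.symm⟩, ?_⟩⟩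
  · rintro _ ⟨V, hV, rfl⟩
    exact bound _ (isStarProjection_mul_transpose hV)
      (by rw [trace_mul_transpose_of_orthonormal hV, Fintype.card_fin])
  · rw [Matrix.mul_assoc]
    exact (rank_mul_le_left _ _).trans (rank_le_width U)
  · exact (frobSq_mul_of_isStarProjection hUP A).symm
  · rintro _ ⟨A₁, hr, hA₁, rfl⟩
    obtain ⟨P, hP, htr, hPA₁⟩ := exists_isStarProjection_mul_eq_self A₁
    have hfeas : frobInner A₁ (P * A) = frobSq A₁ := by
      rw [← hP.transpose_eq, ← frobInner_mul_left, hPA₁, hA₁]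
    exact (frobSq_le_of_frobInner_eq hfeas).trans (bound P hP (by rw [htr]; exact_mod_cast hr))

/-- For `A ∈ ℝ^{n×m}` of rank `r` and `1 ≤ s < r`, the maximum of `‖UUᵀA‖²` over
`U ∈ ℝ^{n×s}` with orthonormal columns equals the maximum of `‖A₁‖²` over
`{A₁ : rank A₁ ≤ s, ⟨A₁, A⟩ = ‖A₁‖²}`, and both equal `∑_{i=1}^s σᵢ²`. -/
theorem max_proj_eq_max_feasible {n m s r : ℕ} (hs1 : 1 ≤ s) (hsr : s < r)
    (A : Matrix (Fin n) (Fin m) ℝ) (hrank : A.rank = r)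
    (U₀ : Matrix (Fin n) (Fin n) ℝ) (V₀ : Matrix (Fin m) (Fin m) ℝ)
    (σ : Fin (min n m) → ℝ) (hU₀ : U₀ᵀ * U₀ = 1) (hV₀ : V₀ᵀ * V₀ = 1)
    (hmono : Antitone σ) (hnn : ∀ i, 0 ≤ σ i) (hA : A = U₀ * svdS σ * V₀ᵀ) :
    IsGreatest {x : ℝ | ∃ U : Matrix (Fin n) (Fin s) ℝ, Uᵀ * U = 1 ∧ x = frobSq (U * Uᵀ * A)}
        (∑ i ∈ Finset.univ.filter (fun i : Fin (min n m) => (i : ℕ) < s), σ i ^ 2) ∧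
      IsGreatest {x : ℝ | ∃ A₁ : Matrix (Fin n) (Fin m) ℝ,
          A₁.rank ≤ s ∧ frobInner A₁ A = frobSq A₁ ∧ x = frobSq A₁}
        (∑ i ∈ Finset.univ.filter (fun i : Fin (min n m) => (i : ℕ) < s), σ i ^ 2) :=
  max_proj_eq_max_feasible_general hsr A hrank U₀ V₀ σ hU₀ hV₀ hmono hnn hA
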